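/- arXiv:1305.3393 — 4 statements merged into one kernel-verified Lean document; each statement's English description precedes it below -/
import Mathlib

section
/- Let X be a hereditarily paracompact Hausdorff space and Y a closed subspace of X. For every pair of open sets U₀ and U₁ in Y with U₀ ∩ U₁ = ∅, there exist open sets V₀ and V₁ in X such that Vᵢ ∩ Y = Uᵢ for i = 0,1 and cl_X(V₀) ∩ cl_X(V₁) ⊆ Y. -/
/-!
Remove from `X` the closed set `Y \ (U₀ ∪ U₁)`. In the open subspace `G` that remains, `U₀` and
`U₁` are disjoint closed sets: the closure of `U₀` lies in `Y` and misses the relatively open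
set `U₁`. Every subspace of `X` is paracompact Hausdorff, hence normal (Dieudonné), so `U₀` and
`U₁` have open neighbourhoods in `G` with disjoint closures in `G`. These are open in `X`, they
meet `Y` exactly in `U₀` and `U₁`, and their closures in `X` can only meet outside `G`, i.e.
inside `Y`.
-/

open Set Set.Notation

theorem image_val_inter_eq_of_disjoint {X : Type*} {Y A B G : Set X} {u : Set G} (hAG : A ⊆ G)
    (hAY : A ⊆ Y) (hGY : G ∩ Y ⊆ A ∪ B) (hAu : G ↓∩ A ⊆ u) (huB : Disjoint u (G ↓∩ B)) :
    (↑) '' u ∩ Y = A := by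
  refine Subset.antisymm ?_ fun x hx ↦ ⟨⟨⟨x, hAG hx⟩, hAu hx, rfl⟩, hAY hx⟩
  rintro _ ⟨⟨x, hxu, rfl⟩, hxY⟩
  exact (hGY ⟨x.2, hxY⟩).resolve_right fun hxB ↦ disjoint_left.1 huB hxu hxB

section

variable {X : Type*} [TopologicalSpace X]

theorem normal_exists_isOpen_disjoint_closure [NormalSpace X] {s t : Set X} (hs : IsClosed s)
    (ht : IsClosed t) (hst : Disjoint s t) :
    ∃ u v : Set X, IsOpen u ∧ IsOpen v ∧ s ⊆ u ∧ t ⊆ v ∧ Disjoint (closure u) (closure v) := by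
  obtain ⟨u, hu, hsu, hut⟩ := normal_exists_closure_subset hs ht.isOpen_compl
    (subset_compl_iff_disjoint_right.2 hst)
  obtain ⟨v, hv, htv, hvu⟩ := normal_exists_closure_subset ht isClosed_closure.isOpen_compl
    (subset_compl_comm.1 hut)
  exact ⟨u, v, hu, hv, hsu, htv, (subset_compl_iff_disjoint_right.1 hvu).symm⟩

section RelativelyOpen

variable {Y U : Set X}

theorem exists_isOpen_inter_eq_of_isOpen_preimage_val (hUY : U ⊆ Y) (hU : IsOpen (Y ↓∩ U)) :
    ∃ W : Set X, IsOpen W ∧ Y ∩ W = U := by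
  obtain ⟨W, hW, hWU⟩ := isOpen_induced_iff.1 hU
  exact ⟨W, hW, by rwa [Subtype.preimage_coe_eq_preimage_coe_iff, inter_eq_right.2 hUY] at hWU⟩

theorem IsClosed.sdiff_of_isOpen_preimage_val (hY : IsClosed Y) (hU : IsOpen (Y ↓∩ U)) :
    IsClosed (Y \ U) := by
  obtain ⟨W, hW, hWU⟩ := isOpen_induced_iff.1 hU
  have hYU : Y \ U = Y \ W := by
    rw [← sdiff_self_inter, ← Subtype.preimage_coe_eq_preimage_coe_iff.1 hWU, sdiff_self_inter]
  rw [hYU]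
  exact hY.sdiff hW

theorem Disjoint.closure_left_of_isOpen_preimage_val {A : Set X} (hAY : A ⊆ Y) (hUY : U ⊆ Y)
    (hU : IsOpen (Y ↓∩ U)) (hAU : Disjoint A U) : Disjoint (closure A) U := by
  obtain ⟨W, hW, hWU⟩ := exists_isOpen_inter_eq_of_isOpen_preimage_val hUY hU
  have hAW : Disjoint A W := by
    rw [disjoint_iff_inter_eq_empty, ← inter_eq_left.2 hAY, inter_assoc, hWU,
      hAU.inter_eq]
  exact (hAW.closure_left hW).mono_right (hWU ▸ inter_subset_right)

end RelativelyOpen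

theorem isClosed_preimage_val_of_disjoint_closure {Y A B G : Set X} (hY : IsClosed Y) (hAY : A ⊆ Y)
    (hGY : G ∩ Y ⊆ A ∪ B) (hAB : Disjoint (closure A) B) : IsClosed (G ↓∩ A) := by
  refine isClosed_preimage_val.2 fun x ⟨hxG, hxA⟩ ↦ ?_
  have hxA' : x ∈ closure A := closure_mono inter_subset_right hxA
  exact (hGY ⟨hxG, hY.closure_subset_iff.2 hAY hxA'⟩).resolve_right
    (disjoint_left.1 hAB hxA')

theorem IsClosed.exists_isOpen_inter_eq_closure_inter_closure_subset [CompletelyNormalSpace X]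
    {Y U₀ U₁ : Set X} (hY : IsClosed Y) (hU₀Y : U₀ ⊆ Y) (hU₁Y : U₁ ⊆ Y)
    (hU₀ : IsOpen (Y ↓∩ U₀)) (hU₁ : IsOpen (Y ↓∩ U₁)) (hdisj : Disjoint U₀ U₁) :
    ∃ V₀ V₁ : Set X, IsOpen V₀ ∧ IsOpen V₁ ∧
      V₀ ∩ Y = U₀ ∧ V₁ ∩ Y = U₁ ∧ closure V₀ ∩ closure V₁ ⊆ Y := by
  set G := (Y \ (U₀ ∪ U₁))ᶜ
  have hG : IsOpen G :=
    (hY.sdiff_of_isOpen_preimage_val (U := U₀ ∪ U₁) (hU₀.union hU₁)).isOpen_compl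
  have hGY : G ∩ Y ⊆ U₀ ∪ U₁ := fun x ⟨hxG, hxY⟩ ↦ by_contra fun hx ↦ hxG ⟨hxY, hx⟩
  have hU₀G : U₀ ⊆ G := fun x hx hxG ↦ hxG.2 (.inl hx)
  have hU₁G : U₁ ⊆ G := fun x hx hxG ↦ hxG.2 (.inr hx)
  have hU₀G_closed : IsClosed (G ↓∩ U₀) := isClosed_preimage_val_of_disjoint_closure hY hU₀Y hGY
    (hdisj.closure_left_of_isOpen_preimage_val hU₀Y hU₁Y hU₁)
  have hU₁G_closed : IsClosed (G ↓∩ U₁) :=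
    isClosed_preimage_val_of_disjoint_closure hY hU₁Y (union_comm U₀ U₁ ▸ hGY)
      (hdisj.symm.closure_left_of_isOpen_preimage_val hU₁Y hU₀Y hU₀)
  obtain ⟨u, v, hu, hv, hU₀u, hU₁v, huv⟩ := normal_exists_isOpen_disjoint_closure hU₀G_closed
    hU₁G_closed (hdisj.preimage _)
  refine ⟨(↑) '' u, (↑) '' v, hG.isOpenMap_subtype_val u hu, hG.isOpenMap_subtype_val v hv,
    image_val_inter_eq_of_disjoint hU₀G hU₀Y hGY hU₀u
      ((huv.mono subset_closure subset_closure).mono_right hU₁v),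
    image_val_inter_eq_of_disjoint hU₁G hU₁Y (union_comm U₀ U₁ ▸ hGY) hU₁v
      ((huv.symm.mono subset_closure subset_closure).mono_right hU₀u), ?_⟩
  rintro x ⟨hxu, hxv⟩
  by_contra hxY
  have hxG : x ∈ G := fun hx ↦ hxY hx.1
  exact disjoint_left.1 huv ((closure_subtype (x := ⟨x, hxG⟩)).2 hxu)
    ((closure_subtype (x := ⟨x, hxG⟩)).2 hxv)

end

/-- hereditarily paracompact Hausdorff space, closed subspace Y,
disjoint open-in-Y sets extend to open sets of X whose closures meet only inside Y. -/
theorem stmt0 {X : Type*} [TopologicalSpace X] [T2Space X]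
    (hpara : ∀ A : Set X, ParacompactSpace A)
    (Y : Set X) (hY : IsClosed Y)
    (U₀ U₁ : Set X) (hU₀Y : U₀ ⊆ Y) (hU₁Y : U₁ ⊆ Y)
    (hU₀ : IsOpen ((↑) ⁻¹' U₀ : Set Y)) (hU₁ : IsOpen ((↑) ⁻¹' U₁ : Set Y))
    (hdisj : U₀ ∩ U₁ = ∅) :
    ∃ V₀ V₁ : Set X, IsOpen V₀ ∧ IsOpen V₁ ∧
      V₀ ∩ Y = U₀ ∧ V₁ ∩ Y = U₁ ∧ closure V₀ ∩ closure V₁ ⊆ Y := by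
  have : CompletelyNormalSpace X := .of_forall_normalSpace fun A ↦
    have := hpara A
    inferInstance
  exact hY.exists_isOpen_inter_eq_closure_inter_closure_subset hU₀Y hU₁Y hU₀ hU₁
    (disjoint_iff_inter_eq_empty.2 hdisj)
end

section
/- Let X be a separable metric space with Cantor–Bendixson perfect kernel X♯. Let U be a regular open set in X♯ and W an open set in X with cl_{X♯}(U) ⊆ W. Then there exists a half-clopen set V in X such that V ∩ X♯ = U and V ⊆ W. -/
/-- A set is regular open if it equals the interior of its closure. -/
def IsRegOpen {X : Type*} [TopologicalSpace X] (U : Set X) : Prop :=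
  interior (closure U) = U

open Set Metric

/-- Lemma 2: `K` is the perfect kernel of a separable metric space `X`,
`U` a regular open set of the subspace `K`, `W` open in `X` with `cl_K U ⊆ W`
(since `K` is closed and `U ⊆ K`, the closure of `U` in `K` equals `closure U`).
Then there is a half-clopen set `V` of `X` (regular open with boundary in `K`)
with `V ∩ K = U` and `V ⊆ W`. -/
theorem stmt5 (X : Type*) [MetricSpace X] [TopologicalSpace.SeparableSpace X]
    (K : Set X) (hK : Perfect K) (hcount : Kᶜ.Countable)
    (U : Set X) (hUK : U ⊆ K) (hU : IsRegOpen ((↑) ⁻¹' U : Set K))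
    (W : Set X) (hW : IsOpen W) (hclUW : closure U ⊆ W) :
    ∃ V : Set X, IsRegOpen V ∧ frontier V ⊆ K ∧ V ∩ K = U ∧ V ⊆ W := by
  by_cases hUe : U = ∅
  · exact ⟨∅, by simp [IsRegOpen], by simp, by simp [hUe], by simp⟩
  by_cases hCe : (K \ U) ∪ Wᶜ = ∅
  · have h1 : K \ U = ∅ ∧ Wᶜ = ∅ := union_empty_iff.mp hCe
    have hKU : K = U := subset_antisymm (diff_eq_empty.mp h1.1) hUK
    have hWu : W = univ := compl_empty_iff.mp h1.2
    exact ⟨univ, by simp [IsRegOpen], by simp, by simp [hKU], by simp [hWu]⟩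
  set A := closure U with hA
  set C := (K \ U) ∪ Wᶜ with hC
  have hAne : A.Nonempty := (nonempty_iff_ne_empty.2 hUe).closure
  have hCne : C.Nonempty := nonempty_iff_ne_empty.2 hCe
  have hAcl : IsClosed A := isClosed_closure
  have hAK : A ⊆ K := hK.closed.closure_subset_iff.mpr hUK
  -- `K \ U` is closed
  have hUopenK : IsOpen ((↑) ⁻¹' U : Set K) := by rw [← hU]; exact isOpen_interior
  obtain ⟨O, hO, hOU⟩ := isOpen_induced_iff.mp hUopenK
  have hmemOU : ∀ x, x ∈ K → (x ∈ O ↔ x ∈ U) := by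
    intro x hx
    have := Set.ext_iff.mp hOU ⟨x, hx⟩
    simpa using this
  have hKU : K \ U = K \ O := by
    ext x; constructor
    · rintro ⟨hx, hxU⟩; exact ⟨hx, fun h => hxU ((hmemOU x hx).mp h)⟩
    · rintro ⟨hx, hxO⟩; exact ⟨hx, fun h => hxO ((hmemOU x hx).mpr h)⟩
  have hCcl : IsClosed C := by
    rw [hC, hKU]; exact (hK.closed.sdiff hO).union hW.isClosed_compl
  -- choose `t`
  obtain ⟨t, ⟨ht0, ht1⟩, htS⟩ :
      (Ioo (0:ℝ) 1 \ ((fun x => infDist x A / (infDist x A + infDist x C)) '' Kᶜ)).Nonempty := by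
    rw [nonempty_iff_ne_empty]
    intro h
    have hsub : Ioo (0:ℝ) 1 ⊆ _ := diff_eq_empty.mp h
    have hcnt : (Ioo (0:ℝ) 1).Countable := (hcount.image _).mono hsub
    rw [← Cardinal.le_aleph0_iff_set_countable,
      Cardinal.mk_Ioo_real (show (0:ℝ) < 1 by norm_num)] at hcnt
    exact absurd hcnt (not_le.mpr Cardinal.aleph0_lt_continuum)
  have ht1' : (0:ℝ) < 1 - t := by linarith
  have key : ∀ x ∉ K, (1 - t) * infDist x A ≠ t * infDist x C := by
    intro x hx heq
    have hfpos : 0 < infDist x A :=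
      (hAcl.notMem_iff_infDist_pos hAne).mp (fun hxA => hx (hAK hxA))
    have hg : 0 ≤ infDist x C := infDist_nonneg
    apply htS
    refine ⟨x, hx, ?_⟩
    have hpos : 0 < infDist x A + infDist x C := by linarith
    field_simp
    linarith
  set V := {x : X | (1 - t) * infDist x A < t * infDist x C} with hV
  have hVopen : IsOpen V :=
    isOpen_lt (continuous_const.mul (continuous_infDist_pt A))
      (continuous_const.mul (continuous_infDist_pt C))
  have hUV : U ⊆ V := by
    intro x hx
    have h1 : infDist x A = 0 := infDist_zero_of_mem (subset_closure hx)
    have h2 : x ∉ C := by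
      rintro (⟨_, h⟩ | h)
      · exact h hx
      · exact h (hclUW (subset_closure hx))
    have h3 : 0 < infDist x C := (hCcl.notMem_iff_infDist_pos hCne).mp h2
    show (1 - t) * infDist x A < t * infDist x C
    rw [h1, mul_zero]
    exact mul_pos ht0 h3
  have hVW : V ⊆ W := by
    intro x hx
    by_contra hxW
    have h0 : infDist x C = 0 := infDist_zero_of_mem (Or.inr hxW)
    have hx' : (1 - t) * infDist x A < t * infDist x C := hx
    have := infDist_nonneg (x := x) (s := A)
    nlinarith
  have hVK : V ∩ K = U := by
    apply subset_antisymm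
    · rintro x ⟨hxV, hxK⟩
      by_contra hxU
      have h0 : infDist x C = 0 := infDist_zero_of_mem (Or.inl ⟨hxK, hxU⟩)
      have hx' : (1 - t) * infDist x A < t * infDist x C := hxV
      have := infDist_nonneg (x := x) (s := A)
      nlinarith
    · exact subset_inter hUV hUK
  have hfr : frontier V ⊆ K := by
    intro x hx
    by_contra hxK
    rw [hVopen.frontier_eq] at hx
    obtain ⟨hxcl, hxV⟩ := hx
    have hle : (1 - t) * infDist x A ≤ t * infDist x C := by
      have : closure V ⊆ {x : X | (1 - t) * infDist x A ≤ t * infDist x C} :=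
        closure_minimal (fun y hy => le_of_lt (show (1 - t) * infDist y A < t * infDist y C from hy))
          (isClosed_le (continuous_const.mul (continuous_infDist_pt A))
            (continuous_const.mul (continuous_infDist_pt C)))
      exact this hxcl
    have hge : t * infDist x C ≤ (1 - t) * infDist x A := not_lt.mp hxV
    exact key x hxK (le_antisymm hle hge)
  have hclVK : closure V ∩ K ⊆ A := by
    rintro z ⟨hzV, hzK⟩
    by_cases hzU : z ∈ U
    · exact subset_closure hzU
    have hzC : infDist z C = 0 := infDist_zero_of_mem (Or.inl ⟨hzK, hzU⟩)
    rw [hAcl.mem_iff_infDist_zero hAne]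
    have hkey : ∀ ε > (0:ℝ), infDist z A ≤ ε := by
      intro ε hε
      obtain ⟨y, hyV, hyz⟩ := Metric.mem_closure_iff.mp hzV ((1 - t) * ε) (by positivity)
      have hy' : (1 - t) * infDist y A < t * infDist y C := hyV
      have h1 : infDist y C ≤ dist y z := by
        have := infDist_le_infDist_add_dist (x := y) (y := z) (s := C)
        rw [hzC] at this; linarith
      have h2 : infDist z A ≤ infDist y A + dist z y := infDist_le_infDist_add_dist
      have h3 : dist z y = dist y z := dist_comm z y
      have h4 : dist z y < (1 - t) * ε := hyz
      nlinarith [infDist_nonneg (x := y) (s := C), dist_nonneg (x := y) (y := z)]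
    by_contra h0
    have hpos : 0 < infDist z A :=
      lt_of_le_of_ne infDist_nonneg (fun h => h0 h.symm)
    have := hkey (infDist z A / 2) (by linarith)
    linarith
  have hreg : IsRegOpen V := by
    apply subset_antisymm
    · intro x hx
      by_contra hxV
      have hxcl : x ∈ closure V := interior_subset hx
      have hxK : x ∈ K := hfr (by rw [hVopen.frontier_eq]; exact ⟨hxcl, hxV⟩)
      obtain ⟨O', hO'sub, hO', hxO'⟩ := mem_interior.mp hx
      have hsub : (Subtype.val ⁻¹' O' : Set K) ⊆ closure ((↑) ⁻¹' U : Set K) := by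
        rintro ⟨z, hz⟩ hzO
        have hzA : z ∈ A := hclVK ⟨hO'sub hzO, hz⟩
        rw [Topology.IsEmbedding.subtypeVal.closure_eq_preimage_closure_image]
        have himg : (Subtype.val '' ((↑) ⁻¹' U : Set K)) = U := by
          rw [Subtype.image_preimage_coe]
          exact inter_eq_self_of_subset_right hUK
        rw [himg]
        exact hzA
      have hxint : (⟨x, hxK⟩ : K) ∈ interior (closure ((↑) ⁻¹' U : Set K)) :=
        mem_interior.mpr ⟨Subtype.val ⁻¹' O', hsub, hO'.preimage continuous_subtype_val, hxO'⟩
      rw [hU] at hxint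
      exact hxV (hUV hxint)
    · exact interior_maximal subset_closure hVopen
  exact ⟨V, hreg, hfr, hVK, hVW⟩
end

section
/- Let X be a metric space and X♯ a closed subset such that X \ X♯ is zero-dimensional. If V₀ is open in X, H₀ is clopen in X \ X♯ with cl_X(V₀) ∩ (X \ X♯) ⊆ H₀, and bd_X(V₀ ∪ H₀) ⊆ X♯ where V₀ ∪ H₀ is regular open, then removing from V₀ ∪ H₀ any set H₁ that is clopen in X and disjoint from X♯ yields again a regular open set with boundary contained in X♯. -/
section RegOpen

variable {X : Type*} [TopologicalSpace X] {U V C : Set X}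

theorem IsRegOpen.isOpen (hU : IsRegOpen U) : IsOpen U :=
  hU ▸ isOpen_interior

theorem IsRegOpen.inter (hU : IsRegOpen U) (hV : IsRegOpen V) : IsRegOpen (U ∩ V) := by
  refine Set.Subset.antisymm ?_ (hU.isOpen.inter hV.isOpen).subset_interior_closure
  calc interior (closure (U ∩ V)) ⊆ interior (closure U ∩ closure V) :=
        interior_mono (closure_inter_subset_inter_closure U V)
    _ = U ∩ V := by rw [interior_inter, hU, hV]

theorem IsClopen.isRegOpen (hC : IsClopen C) : IsRegOpen C := by
  rw [IsRegOpen, hC.isClosed.closure_eq, hC.isOpen.interior_eq]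

theorem IsRegOpen.diff_isClopen (hU : IsRegOpen U) (hC : IsClopen C) : IsRegOpen (U \ C) :=
  hU.inter hC.compl.isRegOpen

theorem frontier_diff_subset_of_isClopen (U : Set X) (hC : IsClopen C) :
    frontier (U \ C) ⊆ frontier U := by
  have h := frontier_inter_subset U Cᶜ
  rw [hC.compl.frontier_eq, Set.inter_empty, Set.union_empty] at h
  exact h.trans Set.inter_subset_left

end RegOpen

theorem stmt6_general (X : Type*) [MetricSpace X]
    (K : Set X)
    (V₀ : Set X)
    (H₀ : Set X)
    (hreg : IsRegOpen (V₀ ∪ H₀)) (hbd : frontier (V₀ ∪ H₀) ⊆ K)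
    (H₁ : Set X) (hH₁ : IsClopen H₁) :
    IsRegOpen ((V₀ ∪ H₀) \ H₁) ∧ frontier ((V₀ ∪ H₀) \ H₁) ⊆ K :=
  ⟨hreg.diff_isClopen hH₁, (frontier_diff_subset_of_isClopen _ hH₁).trans hbd⟩

/-- stability of half-clopen sets: removing a clopen set `H₁`
disjoint from `K` from the half-clopen set `V₀ ∪ H₀` yields again a regular
open set with boundary contained in `K`. -/
theorem stmt6 (X : Type*) [MetricSpace X]
    (K : Set X) (hK : IsClosed K)
    (hzero : ∃ B : Set (Set ↥(Kᶜ)), TopologicalSpace.IsTopologicalBasis B ∧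
      ∀ U ∈ B, IsClopen U)
    (V₀ : Set X) (hV₀ : IsOpen V₀)
    (H₀ : Set X) (hH₀K : H₀ ⊆ Kᶜ) (hH₀ : IsClopen ((↑) ⁻¹' H₀ : Set ↥(Kᶜ)))
    (hclV₀ : closure V₀ ∩ Kᶜ ⊆ H₀)
    (hreg : IsRegOpen (V₀ ∪ H₀)) (hbd : frontier (V₀ ∪ H₀) ⊆ K)
    (H₁ : Set X) (hH₁ : IsClopen H₁) (hH₁K : H₁ ∩ K = ∅) :
    IsRegOpen ((V₀ ∪ H₀) \ H₁) ∧ frontier ((V₀ ∪ H₀) \ H₁) ⊆ K :=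
  stmt6_general X K V₀ H₀ hreg hbd H₁ hH₁
end

section
/- Let X be a separable metric space with nonempty perfect kernel X♯. There exists a family {(U_{n,0}, U_{n,1}, U*_{n,1}) : n < ω} where each U_{n,0}, U_{n,1} are nonempty regular open sets in X♯ with cl_{X♯} U_{n,0} ⊆ U_{n,1}, each U*_{n,1} is open in X with U*_{n,1} ∩ X♯ = U_{n,1}, and for every x ∈ X♯ and every neighborhood G of x in X there is n < ω with x ∈ U_{n,0} and U*_{n,1} ⊆ G. -/
/-! Index by a point `dᵢ` of a countable dense sequence in `K` and a positive rational `q`.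
The regularised balls `int cl B_K(dᵢ, q/2)` and `int cl B_K(dᵢ, q)` are nested as required, and
the larger one is the trace on `K` of an open set of `X` lying inside `B_X(dᵢ, 2q)`. Since
the `dᵢ` are dense in `K`, these `X`-balls shrink to every point of `K`. -/

open Set Metric Topology

theorem isRegOpen_interior_closure {X : Type*} [TopologicalSpace X] (s : Set X) :
    IsRegOpen (interior (closure s)) :=
  interior_closure_idem

theorem exists_isOpen_subset_preimage_val_eq {X : Type*} [TopologicalSpace X] {K : Set X}
    {U : Set K} (hU : IsOpen U) {W : Set X} (hW : IsOpen W) (hUW : U ⊆ (↑) ⁻¹' W) :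
    ∃ V : Set X, IsOpen V ∧ V ⊆ W ∧ (↑) ⁻¹' V = U := by
  obtain ⟨V, hV, rfl⟩ := isOpen_induced_iff.mp hU
  exact ⟨V ∩ W, hV.inter hW, inter_subset_right, by rwa [preimage_inter, inter_eq_left]⟩

section PseudoMetric

variable {X : Type*} [PseudoMetricSpace X]

theorem mem_interior_closure_ball_of_dist_lt {c x : X} {r : ℝ} (h : dist x c < r) :
    x ∈ interior (closure (ball c r)) :=
  isOpen_ball.subset_interior_closure h

theorem closure_interior_closure_ball_subset_closedBall (c : X) (r : ℝ) :
    closure (interior (closure (ball c r))) ⊆ closedBall c r :=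
  closure_minimal (interior_subset.trans closure_ball_subset_closedBall) isClosed_closedBall

theorem closure_interior_closure_ball_half_subset (c : X) {r : ℝ} (hr : 0 < r) :
    closure (interior (closure (ball c (r / 2)))) ⊆ interior (closure (ball c r)) :=
  fun _ hx => mem_interior_closure_ball_of_dist_lt <|
    (closure_interior_closure_ball_subset_closedBall c _ hx).trans_lt (half_lt_self hr)

theorem exists_isOpen_subset_ball_preimage_val_eq {K : Set X} (c : K) {r : ℝ} (hr : 0 < r) :
    ∃ V : Set X, IsOpen V ∧ V ⊆ ball (c : X) (2 * r) ∧
      (↑) ⁻¹' V = interior (closure (ball c r)) := by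
  refine exists_isOpen_subset_preimage_val_eq isOpen_interior isOpen_ball fun x hx => ?_
  have hxc : dist x c ≤ r := closure_interior_closure_ball_subset_closedBall c r (subset_closure hx)
  show dist (x : X) c < 2 * r
  rw [← Subtype.dist_eq]
  linarith

theorem DenseRange.exists_ball_mem_ball_subset {K : Set X} {d : ℕ → K} (hd : DenseRange d)
    (x : K) {G : Set X} (hG : G ∈ 𝓝 (x : X)) :
    ∃ i, ∃ q : {q : ℚ // 0 < q}, x ∈ ball (d i) (q / 2) ∧ ball (d i : X) (2 * q) ⊆ G := by
  obtain ⟨ε, hε, hεG⟩ := Metric.mem_nhds_iff.mp hG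
  obtain ⟨q, hq, hqε⟩ := exists_pos_rat_lt (div_pos hε three_pos)
  obtain ⟨i, hi⟩ := Metric.denseRange_iff.mp hd x (q / 2) (by positivity)
  refine ⟨i, ⟨q, hq⟩, hi, (ball_subset_ball' ?_).trans hεG⟩
  rw [dist_comm, ← Subtype.dist_eq]
  linarith

end PseudoMetric

theorem stmt15_general {X : Type*} [MetricSpace X] [TopologicalSpace.SeparableSpace X]
    (K : Set X) (hne : K.Nonempty) :
    ∃ (U₀ U₁ : ℕ → Set ↥K) (Ustar : ℕ → Set X),
      (∀ n, (U₀ n).Nonempty ∧ IsRegOpen (U₀ n)) ∧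
      (∀ n, (U₁ n).Nonempty ∧ IsRegOpen (U₁ n)) ∧
      (∀ n, closure (U₀ n) ⊆ U₁ n) ∧
      (∀ n, IsOpen (Ustar n) ∧ ((↑) ⁻¹' (Ustar n) : Set ↥K) = U₁ n) ∧
      (∀ (x : X) (hx : x ∈ K), ∀ G ∈ nhds x,
        ∃ n, (⟨x, hx⟩ : ↥K) ∈ U₀ n ∧ Ustar n ⊆ G) := by
  have : Nonempty K := hne.to_subtype
  have hd := TopologicalSpace.denseRange_denseSeq K
  obtain ⟨f, hf⟩ := exists_surjective_nat (ℕ × {q : ℚ // 0 < q})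
  set c : ℕ → K := fun n => TopologicalSpace.denseSeq K (f n).1
  set r : ℕ → ℝ := fun n => (f n).2
  have hr (n : ℕ) : 0 < r n := Rat.cast_pos.mpr (f n).2.2
  choose V hVopen hVball hVeq using fun n => exists_isOpen_subset_ball_preimage_val_eq (c n) (hr n)
  refine ⟨fun n => interior (closure (ball (c n) (r n / 2))),
    fun n => interior (closure (ball (c n) (r n))), V,
    fun n => ⟨⟨c n, mem_interior_closure_ball_of_dist_lt (by simpa using hr n)⟩,
      isRegOpen_interior_closure _⟩,
    fun n => ⟨⟨c n, mem_interior_closure_ball_of_dist_lt (by simpa using hr n)⟩,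
      isRegOpen_interior_closure _⟩,
    fun n => closure_interior_closure_ball_half_subset (c n) (hr n),
    fun n => ⟨hVopen n, hVeq n⟩, fun x hx G hG => ?_⟩
  obtain ⟨i, q, hxi, hiG⟩ := hd.exists_ball_mem_ball_subset ⟨x, hx⟩ hG
  obtain ⟨n, hn⟩ := hf (i, q)
  have hcn : c n = TopologicalSpace.denseSeq K i := by simp [c, hn]
  have hrn : r n = q := by simp [r, hn]
  exact ⟨n, isOpen_ball.subset_interior_closure (by rwa [hcn, hrn]),
    (hVball n).trans (by rw [hcn, hrn]; exact hiG)⟩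

/-- existence of the anchored countable base
`{(U_{n,0}, U_{n,1}, U*_{n,1})}` used in Theorem 1: `U_{n,0}, U_{n,1}` are
nonempty regular open sets of the perfect kernel `K` with
`cl_K U_{n,0} ⊆ U_{n,1}`, `U*_{n,1}` is open in `X` with `U*_{n,1} ∩ K = U_{n,1}`,
and every neighborhood in `X` of a point of `K` contains some `U*_{n,1}` with
the point in `U_{n,0}`. -/
theorem stmt15 {X : Type*} [MetricSpace X] [TopologicalSpace.SeparableSpace X]
    (K : Set X) (hK : Perfect K) (hcount : Kᶜ.Countable) (hne : K.Nonempty) :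
    ∃ (U₀ U₁ : ℕ → Set ↥K) (Ustar : ℕ → Set X),
      (∀ n, (U₀ n).Nonempty ∧ IsRegOpen (U₀ n)) ∧
      (∀ n, (U₁ n).Nonempty ∧ IsRegOpen (U₁ n)) ∧
      (∀ n, closure (U₀ n) ⊆ U₁ n) ∧
      (∀ n, IsOpen (Ustar n) ∧ ((↑) ⁻¹' (Ustar n) : Set ↥K) = U₁ n) ∧
      (∀ (x : X) (hx : x ∈ K), ∀ G ∈ nhds x,
        ∃ n, (⟨x, hx⟩ : ↥K) ∈ U₀ n ∧ Ustar n ⊆ G) :=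
  stmt15_general K hne
end
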